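/- Let D = −i d/dx on L²(ℝ) and λ ∈ ℂ with Im(λ²) > 0. For u ∈ L²(ℝ, ℂ), the integral kernel of (D + λ²)^{-1} is i e^{iλ²(x−y)} 𝟙_{x>y} (suitably interpreted), and the Hilbert–Schmidt norm of the operator (D+λ²)^{-1} u (D−λ²)^{-1} conj(u) satisfies ‖(D+λ²)^{-1} u (D−λ²)^{-1} ū‖₂² ≤ (1/Im λ²) ‖u‖_{L²}² ‖(D+2λ²)^{-1} u‖_{L∞}². -/

import Mathlib

open MeasureTheory Complex

/-- The integral kernel of the free resolvent `(D + λ²)⁻¹` of `D = −i d/dx` (for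
`Im λ² > 0`), as stated: `i e^{iλ²(x−y)} 𝟙_{x>y}`. -/
noncomputable def kerDplus (lam : ℂ) (x y : ℝ) : ℂ :=
  if y < x then Complex.I * Complex.exp (Complex.I * lam ^ 2 * ((x : ℂ) - y)) else 0

/-- The integral kernel of the free resolvent `(D − λ²)⁻¹` of `D = −i d/dx` (for
`Im λ² > 0`), with the complementary orientation: `−i e^{-iλ²(x−y)} 𝟙_{x<y}`. -/
noncomputable def kerDminus (lam : ℂ) (x y : ℝ) : ℂ :=
  if x < y then -Complex.I * Complex.exp (-Complex.I * lam ^ 2 * ((x : ℂ) - y)) else 0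

/-- The integral kernel of `(D+λ²)⁻¹ u (D−λ²)⁻¹ conj u`, where `u` and `conj u` act as
multiplication operators. -/
noncomputable def compKer (u : ℝ → ℂ) (lam : ℂ) (x y : ℝ) : ℂ :=
  (∫ z : ℝ, kerDplus lam x z * u z * kerDminus lam z y) * (starRingEnd ℂ) (u y)

/-- `(D + 2λ²)⁻¹ u`, realized via the resolvent kernel. -/
noncomputable def resolvent2 (u : ℝ → ℂ) (lam : ℂ) (x : ℝ) : ℂ :=
  ∫ y : ℝ, (if y < x then Complex.I * Complex.exp (2 * Complex.I * lam ^ 2 * ((x : ℂ) - y))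
    else 0) * u y

/-!
The kernels of `(D + λ²)⁻¹` and `(D − λ²)⁻¹` live on `z < x` and `z < y`, so in the composed
kernel the `z`-integral runs over `z < min x y` and the exponentials combine into
`e^{iλ²|x−y|}` times the kernel of `(D + 2λ²)⁻¹` at `min x y`. Hence
`|K(x, y)| = e^{−Im λ² |x−y|} |(D + 2λ²)⁻¹u (min x y)| |u y|`. Bounding the middle factor by
its supremum `S` leaves `S² e^{−2 Im λ² |x−y|} |u y|²`, a convolution in `x` whose integral is
`S² ‖u‖² / Im λ²`. The supremum must be shown finite (otherwise `⨆` is `0`); this follows from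
`e |u| ≤ (e² + |u|²) / 2` for the exponentially decaying kernel `e`.
-/

open Set Convolution

lemma integrable_exp_neg_mul_abs {b : ℝ} (hb : 0 < b) :
    Integrable fun t : ℝ => Real.exp (-b * |t|) := by
  rw [← integrableOn_univ, ← Iic_union_Ioi (a := (0 : ℝ)), integrableOn_union]
  constructor
  · refine (integrableOn_exp_mul_Iic hb 0).congr_fun (fun t ht => ?_) measurableSet_Iic
    simp [abs_of_nonpos (show t ≤ 0 from ht)]
  · refine (integrableOn_exp_mul_Ioi (neg_lt_zero.2 hb) 0).congr_fun (fun t ht => ?_)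
      measurableSet_Ioi
    rw [abs_of_pos ht]

lemma integral_exp_neg_mul_abs {b : ℝ} (hb : 0 < b) :
    ∫ t : ℝ, Real.exp (-b * |t|) = 2 / b := by
  rw [integral_comp_abs (f := fun t => Real.exp (-b * t)),
    integral_exp_mul_Ioi (neg_lt_zero.2 hb)]
  field_simp
  simp

lemma integral_integral_le_of_le_mul_exp_neg_abs {F : ℝ → ℝ → ℝ} {g : ℝ → ℝ} {b : ℝ}
    (hb : 0 < b) (hg : Integrable g) (hF₀ : ∀ x y, 0 ≤ F x y)
    (hF : ∀ x y, F x y ≤ g y * Real.exp (-b * |x - y|)) :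
    ∫ x, ∫ y, F x y ≤ 2 / b * ∫ y, g y := by
  set e : ℝ → ℝ := fun t => Real.exp (-b * |t|)
  have he : Integrable e := integrable_exp_neg_mul_abs hb
  calc ∫ x, ∫ y, F x y
      ≤ ∫ x, (g ⋆[ContinuousLinearMap.mul ℝ ℝ] e) x := by
        refine integral_mono_of_nonneg (.of_forall fun x => integral_nonneg (hF₀ x))
          (hg.integrable_convolution _ he) ?_
        filter_upwards [hg.ae_convolution_exists (ContinuousLinearMap.mul ℝ ℝ) he] with x hx
        exact integral_mono_of_nonneg (.of_forall (hF₀ x)) hx (.of_forall (hF x))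
    _ = (∫ y, g y) * ∫ t, e t := integral_convolution _ hg he
    _ = 2 / b * ∫ y, g y := by rw [integral_exp_neg_mul_abs hb, mul_comm]

lemma norm_exp_I_mul_mul_ofReal (w : ℂ) (r : ℝ) :
    ‖Complex.exp (Complex.I * w * r)‖ = Real.exp (-w.im * r) := by
  simp [Complex.norm_exp, Complex.mul_re, Complex.mul_im]

lemma exp_neg_mul_sq (b t : ℝ) : Real.exp (-b * t) ^ 2 = Real.exp (-(2 * b) * t) := by
  rw [← Real.exp_nat_mul]
  ring_nf

noncomputable def kerResolvent2 (lam : ℂ) (x z : ℝ) : ℂ :=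
  if z < x then Complex.I * Complex.exp (2 * Complex.I * lam ^ 2 * ((x : ℂ) - z)) else 0

lemma resolvent2_eq_integral_kerResolvent2 (u : ℝ → ℂ) (lam : ℂ) (x : ℝ) :
    resolvent2 u lam x = ∫ z, kerResolvent2 lam x z * u z :=
  rfl

lemma norm_kerResolvent2_le (lam : ℂ) (x z : ℝ) :
    ‖kerResolvent2 lam x z‖ ≤ Real.exp (-(2 * (lam ^ 2).im) * |x - z|) := by
  unfold kerResolvent2
  split_ifs with hzx
  · have hexp : 2 * Complex.I * lam ^ 2 * ((x : ℂ) - z) =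
        Complex.I * (2 * lam ^ 2) * (x - z : ℝ) := by
      push_cast; ring
    rw [norm_mul, Complex.norm_I, one_mul, hexp, norm_exp_I_mul_mul_ofReal,
      abs_of_pos (sub_pos.2 hzx)]
    simp
  · simpa using Real.exp_nonneg _

lemma kerDplus_mul_kerDminus (lam : ℂ) (x y z : ℝ) :
    kerDplus lam x z * kerDminus lam z y =
      -Complex.I * Complex.exp (Complex.I * lam ^ 2 * (|x - y| : ℝ)) *
        kerResolvent2 lam (min x y) z := by
  unfold kerDplus kerDminus kerResolvent2
  by_cases hx : z < x <;> by_cases hy : z < y <;> simp only [hx, hy, lt_min_iff, and_self,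
    and_false, false_and, if_true, if_false, mul_zero, zero_mul]
  have habs : ((|x - y| : ℝ) : ℂ) = x + y - 2 * ((min x y : ℝ) : ℂ) := by
    rcases le_total x y with hxy | hxy
    · rw [abs_of_nonpos (by linarith), min_eq_left hxy]; push_cast; ring
    · rw [abs_of_nonneg (by linarith), min_eq_right hxy]; push_cast; ring
  have hexp : Complex.exp (Complex.I * lam ^ 2 * (x - z)) *
        Complex.exp (-Complex.I * lam ^ 2 * (z - y)) =
      Complex.exp (Complex.I * lam ^ 2 * (|x - y| : ℝ)) *
        Complex.exp (2 * Complex.I * lam ^ 2 * (((min x y : ℝ) : ℂ) - z)) := by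
    rw [← Complex.exp_add, ← Complex.exp_add, habs]
    ring_nf
  linear_combination (-Complex.I * Complex.I) * hexp

lemma compKer_eq (u : ℝ → ℂ) (lam : ℂ) (x y : ℝ) :
    compKer u lam x y = -Complex.I * Complex.exp (Complex.I * lam ^ 2 * (|x - y| : ℝ)) *
      resolvent2 u lam (min x y) * (starRingEnd ℂ) (u y) := by
  have hfactor : ∀ z, kerDplus lam x z * u z * kerDminus lam z y =
      -Complex.I * Complex.exp (Complex.I * lam ^ 2 * (|x - y| : ℝ)) *
        (kerResolvent2 lam (min x y) z * u z) := fun z => by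
    rw [mul_right_comm, kerDplus_mul_kerDminus, mul_assoc]
  rw [compKer, resolvent2_eq_integral_kerResolvent2, integral_congr_ae (.of_forall hfactor),
    integral_const_mul]

lemma norm_compKer (u : ℝ → ℂ) (lam : ℂ) (x y : ℝ) :
    ‖compKer u lam x y‖ =
      Real.exp (-(lam ^ 2).im * |x - y|) * ‖resolvent2 u lam (min x y)‖ * ‖u y‖ := by
  simp [compKer_eq, norm_exp_I_mul_mul_ofReal]

lemma norm_resolvent2_le (u : ℝ → ℂ) (hu : Integrable fun z => ‖u z‖ ^ 2) (lam : ℂ)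
    (h : 0 < (lam ^ 2).im) (x : ℝ) :
    ‖resolvent2 u lam x‖ ≤ (1 / (2 * (lam ^ 2).im) + ∫ z, ‖u z‖ ^ 2) / 2 := by
  set b := (lam ^ 2).im
  set e : ℝ → ℝ := fun z => Real.exp (-(2 * b) * |x - z|)
  have he : Integrable fun z => e z ^ 2 := by
    simpa only [e, exp_neg_mul_sq] using
      (integrable_exp_neg_mul_abs (by positivity)).comp_sub_left x
  have hpoint : ∀ z, ‖kerResolvent2 lam x z * u z‖ ≤ (e z ^ 2 + ‖u z‖ ^ 2) / 2 := fun z => by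
    rw [norm_mul]
    nlinarith [two_mul_le_add_sq (e z) ‖u z‖, norm_kerResolvent2_le lam x z, norm_nonneg (u z)]
  calc ‖resolvent2 u lam x‖
      ≤ ∫ z, (e z ^ 2 + ‖u z‖ ^ 2) / 2 :=
        norm_integral_le_of_norm_le ((he.add hu).div_const 2) (.of_forall hpoint)
    _ = (1 / (2 * b) + ∫ z, ‖u z‖ ^ 2) / 2 := by
        rw [integral_div, integral_add he hu]
        simp only [e, exp_neg_mul_sq]
        rw [integral_sub_left_eq_self (fun t => Real.exp (-(2 * (2 * b)) * |t|)),
          integral_exp_neg_mul_abs (by positivity)]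
        field_simp

theorem hilbertSchmidt_bound_resolvent_product (u : ℝ → ℂ)
    (hu : MemLp u 2 (volume : Measure ℝ)) (lam : ℂ) (h : 0 < (lam ^ 2).im) :
    (∫ x : ℝ, ∫ y : ℝ, ‖compKer u lam x y‖ ^ 2) ≤
      1 / (lam ^ 2).im * (∫ x : ℝ, ‖u x‖ ^ 2) * (⨆ x : ℝ, ‖resolvent2 u lam x‖) ^ 2 := by
  set b := (lam ^ 2).im
  set S := ⨆ x : ℝ, ‖resolvent2 u lam x‖
  have hu2 : Integrable fun y => ‖u y‖ ^ 2 :=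
    (memLp_two_iff_integrable_sq_norm hu.aestronglyMeasurable).1 hu
  have hS : ∀ m, ‖resolvent2 u lam m‖ ≤ S :=
    le_ciSup ⟨_, forall_mem_range.2 (norm_resolvent2_le u hu2 lam h)⟩
  have hpoint : ∀ x y,
      ‖compKer u lam x y‖ ^ 2 ≤ S ^ 2 * ‖u y‖ ^ 2 * Real.exp (-(2 * b) * |x - y|) := fun x y =>
    calc ‖compKer u lam x y‖ ^ 2
        ≤ (Real.exp (-b * |x - y|) * S * ‖u y‖) ^ 2 := by
          rw [norm_compKer]; gcongr; exact hS _
      _ = S ^ 2 * ‖u y‖ ^ 2 * Real.exp (-(2 * b) * |x - y|) := by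
          rw [← exp_neg_mul_sq]; ring
  calc (∫ x, ∫ y, ‖compKer u lam x y‖ ^ 2)
      ≤ 2 / (2 * b) * ∫ y, S ^ 2 * ‖u y‖ ^ 2 :=
        integral_integral_le_of_le_mul_exp_neg_abs (by positivity) (hu2.const_mul _)
          (fun _ _ => by positivity) hpoint
    _ = 1 / b * (∫ x, ‖u x‖ ^ 2) * S ^ 2 := by
        rw [integral_const_mul]; field_simp
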